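/- arXiv:0905.2396 — 4 statements merged into one kernel-verified Lean document; each statement's English description precedes it below -/
import Mathlib

section
/- The Lehmer polynomial φ₁₀(x) = x^10 + x^9 - x^7 - x^6 - x^5 - x^4 - x^3 + x + 1 has exactly one real root α with α > 1, and this root satisfies 1.17 < α < 1.18. -/
open Polynomial

noncomputable def lehF (x : ℝ) : ℝ := x^10+x^9-x^7-x^6-x^5-x^4-x^3+x+1
noncomputable def lehQ (t : ℝ) : ℝ := t^5+t^4-5*t^3-5*t^2+4*t+3

lemma lehF_eq (x : ℝ) (hx : x ≠ 0) : lehF x = x^5 * lehQ (x + 1/x) := by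
  unfold lehF lehQ; field_simp; ring

lemma lehQ_mono : ∀ a b : ℝ, 2 ≤ a → a < b → lehQ a < lehQ b := by
  intro a b ha hab
  have hb : 2 ≤ b := le_of_lt (lt_of_le_of_lt ha hab)
  have key : lehQ b - lehQ a = (b-a) * (b^4+a*b^3+a^2*b^2+a^3*b+a^4 + b^3+a*b^2+a^2*b+a^3
      - 5*b^2-5*a*b-5*a^2 - 5*a-5*b + 4) := by unfold lehQ; ring
  have ha0 : (0:ℝ) ≤ a - 2 := by linarith
  have hb0 : (0:ℝ) ≤ b - 2 := by linarith
  have hB : 0 < b^4+a*b^3+a^2*b^2+a^3*b+a^4 + b^3+a*b^2+a^2*b+a^3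
      - 5*b^2-5*a*b-5*a^2 - 5*a-5*b + 4 := by
    nlinarith [mul_nonneg (mul_nonneg ha0 ha0) (sq_nonneg a), mul_nonneg (mul_nonneg hb0 hb0) (sq_nonneg b),
      mul_nonneg ha0 (sq_nonneg a), mul_nonneg hb0 (sq_nonneg b),
      mul_nonneg ha0 (sq_nonneg b), mul_nonneg hb0 (sq_nonneg a),
      mul_nonneg (mul_nonneg ha0 hb0) (sq_nonneg a), mul_nonneg (mul_nonneg ha0 hb0) (sq_nonneg b),
      mul_nonneg ha0 hb0, sq_nonneg (a-2), sq_nonneg (b-2),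
      mul_nonneg (mul_nonneg ha0 ha0) hb0, mul_nonneg (mul_nonneg hb0 hb0) ha0]
  nlinarith [mul_pos (sub_pos.2 hab) hB]

lemma t_mono : ∀ a b : ℝ, 1 ≤ a → a < b → a + 1/a < b + 1/b := by
  intro a b ha hab
  have ha0 : 0 < a := lt_of_lt_of_le one_pos ha
  have hb0 : 0 < b := lt_trans ha0 hab
  have key : b + 1/b - (a + 1/a) = (b-a)*(a*b-1)/(a*b) := by field_simp; ring
  have h1 : 0 < (b-a)*(a*b-1)/(a*b) := by
    apply div_pos
    · apply mul_pos (sub_pos.2 hab); nlinarith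
    · exact mul_pos ha0 hb0
  linarith

lemma t_gt_two (x : ℝ) (hx : 1 < x) : 2 < x + 1/x := by
  have h0 : 0 < x := lt_trans one_pos hx
  have h1 : x + 1/x - 2 = (x-1)^2/x := by field_simp; ring
  nlinarith [div_pos (by nlinarith [sq_nonneg (x-1)] : (0:ℝ) < (x-1)^2) h0]

lemma lehQ_root (x : ℝ) (hx : 0 < x) (h : lehF x = 0) : lehQ (x + 1/x) = 0 := by
  have := lehF_eq x (ne_of_gt hx)
  rw [h] at this
  have h5 : x^5 ≠ 0 := pow_ne_zero _ (ne_of_gt hx)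
  exact (mul_eq_zero.1 this.symm).resolve_left h5

theorem lehmer_unique_root_gt_one :
    ∃ α : ℝ, 1.17 < α ∧ α < 1.18 ∧
      (X^10 + X^9 - X^7 - X^6 - X^5 - X^4 - X^3 + X + 1 : ℝ[X]).eval α = 0 ∧
      ∀ β : ℝ, 1 < β →
        (X^10 + X^9 - X^7 - X^6 - X^5 - X^4 - X^3 + X + 1 : ℝ[X]).eval β = 0 →
        β = α := by
  have heval : ∀ x : ℝ, (X^10 + X^9 - X^7 - X^6 - X^5 - X^4 - X^3 + X + 1 : ℝ[X]).eval x = lehF x := by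
    intro x; simp [lehF]
  have hcont : ContinuousOn lehF (Set.Icc 1.17 1.18) := by
    unfold lehF; fun_prop
  have hlo : lehF 1.17 < 0 := by unfold lehF; norm_num
  have hhi : 0 < lehF 1.18 := by unfold lehF; norm_num
  have hsub := intermediate_value_Icc (by norm_num : (1.17:ℝ) ≤ 1.18) hcont
  obtain ⟨α, hαmem, hαroot⟩ := hsub ⟨le_of_lt hlo, le_of_lt hhi⟩
  obtain ⟨h1, h2⟩ := hαmem
  have hα1 : 1.17 < α := lt_of_le_of_ne h1 (by rintro rfl; exact absurd hαroot (ne_of_lt hlo))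
  have hα2 : α < 1.18 := lt_of_le_of_ne h2 (by rintro rfl; exact absurd hαroot.symm (ne_of_lt hhi))
  have hαgt1 : 1 < α := by linarith
  refine ⟨α, hα1, hα2, by rw [heval]; exact hαroot, ?_⟩
  intro β hβ hβroot
  rw [heval] at hβroot
  have hqα : lehQ (α + 1/α) = 0 := lehQ_root α (by linarith) hαroot
  have hqβ : lehQ (β + 1/β) = 0 := lehQ_root β (by linarith) hβroot
  have htα : 2 < α + 1/α := t_gt_two α hαgt1
  have htβ : 2 < β + 1/β := t_gt_two β hβ
  have hteq : β + 1/β = α + 1/α := by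
    rcases lt_trichotomy (β + 1/β) (α + 1/α) with h | h | h
    · exact absurd (lehQ_mono _ _ (le_of_lt htβ) h) (by rw [hqα, hqβ]; exact lt_irrefl 0)
    · exact h
    · exact absurd (lehQ_mono _ _ (le_of_lt htα) h) (by rw [hqα, hqβ]; exact lt_irrefl 0)
  rcases lt_trichotomy β α with h | h | h
  · exact absurd (t_mono _ _ (le_of_lt hβ) h) (by rw [hteq]; exact lt_irrefl _)
  · exact h
  · exact absurd (t_mono _ _ (le_of_lt hαgt1) h) (by rw [hteq]; exact lt_irrefl _)
end

section
/- Let M ∈ GL_n(ℤ) be a matrix of finite order d, and let p^m be a prime power dividing d exactly (i.e., p^m ∥ d). Then φ(p^m) = p^(m-1)(p-1) ≤ n, where φ is Euler's totient function. -/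
open Matrix Polynomial

theorem totient_le_of_finite_order_int_matrix
    (n : ℕ) (M : Matrix (Fin n) (Fin n) ℤ) (hMunit : IsUnit M.det)
    (d : ℕ) (hd : 0 < d) (hMd : M ^ d = 1)
    (hmin : ∀ e : ℕ, 0 < e → e < d → M ^ e ≠ 1)
    (p m : ℕ) (hp : p.Prime) (hm : 1 ≤ m)
    (hdvd : p ^ m ∣ d) (hndvd : ¬ p ^ (m + 1) ∣ d) :
    p ^ (m - 1) * (p - 1) ≤ n := by
  haveI : Fact p.Prime := ⟨hp⟩
  set e := d / p ^ m with he
  have hed : e * p ^ m = d := Nat.div_mul_cancel hdvd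
  have hppos : 0 < p ^ m := pow_pos hp.pos m
  have hepos : 0 < e := by
    rcases Nat.eq_zero_or_pos e with h | h
    · simp [h] at hed; omega
    · exact h
  set φ : Matrix (Fin n) (Fin n) ℤ →+* Matrix (Fin n) (Fin n) ℚ :=
    (Int.castRingHom ℚ).mapMatrix with hφ
  have hφinj : Function.Injective φ := Matrix.map_injective Int.cast_injective
  set A : Matrix (Fin n) (Fin n) ℚ := φ (M ^ e) with hA
  have hA1 : A ^ p ^ m = 1 := by
    rw [hA, ← map_pow, ← pow_mul, hed, hMd, _root_.map_one]
  set q : ℚ[X] := minpoly ℚ A with hq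
  have hqdvd : q ∣ X ^ p ^ m - 1 := by
    apply minpoly.dvd
    simp [hA1]
  set Φ : ℚ[X] := cyclotomic (p ^ m) ℚ with hΦ
  by_cases hcase : Φ ∣ q
  · -- Φ divides the minimal polynomial, hence the charpoly
    have hdvdc : Φ ∣ A.charpoly := hcase.trans (Matrix.minpoly_dvd_charpoly A)
    have hne : A.charpoly ≠ 0 := (Matrix.charpoly_monic A).ne_zero
    have hdeg := Polynomial.natDegree_le_natDegree (Polynomial.degree_le_of_dvd hdvdc hne)
    rw [hΦ, natDegree_cyclotomic] at hdeg
    rw [Matrix.charpoly_natDegree_eq_dim, Fintype.card_fin] at hdeg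
    rwa [Nat.totient_prime_pow hp hm] at hdeg
  · -- otherwise q divides X ^ p ^ (m-1) - 1, contradicting minimality
    exfalso
    have hm' : m - 1 + 1 = m := Nat.succ_pred_eq_of_pos hm
    have hfac : Φ * (X ^ p ^ (m - 1) - 1) = X ^ p ^ m - 1 := by
      rw [hΦ, ← hm']
      exact cyclotomic_prime_pow_mul_X_pow_sub_one ℚ p (m - 1)
    have hcop : IsCoprime q Φ :=
      ((cyclotomic.irreducible_rat hppos).coprime_iff_not_dvd.mpr hcase).symm
    have hqdvd' : q ∣ X ^ p ^ (m - 1) - 1 := by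
      refine hcop.dvd_of_dvd_mul_left ?_
      rwa [hfac]
    have hAe : A ^ p ^ (m - 1) = 1 := by
      have := minpoly.aeval ℚ A
      have h0 : (Polynomial.aeval A) (X ^ p ^ (m - 1) - 1 : ℚ[X]) = 0 := by
        obtain ⟨c, hc⟩ := hqdvd'
        rw [← hq] at this
        rw [hc, _root_.map_mul, this, zero_mul]
      simpa [sub_eq_zero] using h0
    have hMe : M ^ (e * p ^ (m - 1)) = 1 := by
      apply hφinj
      rw [_root_.map_one, map_pow, pow_mul, ← map_pow]
      exact hAe
    have hlt : e * p ^ (m - 1) < d := by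
      rw [← hed, ← hm', pow_succ, ← mul_assoc]
      exact lt_mul_of_one_lt_right (Nat.mul_pos hepos (pow_pos hp.pos _)) hp.one_lt
    exact hmin _ (Nat.mul_pos hepos (pow_pos hp.pos _)) hlt hMe
end

section
/- Kronecker's theorem: if M is a square integer matrix all of whose complex eigenvalues have absolute value 1 and M is invertible over ℤ, then every eigenvalue of M is a root of unity. -/
/-!
A root `z` of a monic integer polynomial is an algebraic integer, and its conjugates (the images
of `z` under the complex embeddings of `ℚ(z)`) are roots of the same polynomial, hence of
absolute value `1`. The powers of `z` are algebraic integers of bounded degree whose conjugates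
are bounded too, so they take finitely many values; two of them coincide and `z` is a root of
unity (`NumberField.Embeddings.pow_eq_one_of_norm_eq_one`).
-/

open Polynomial IntermediateField

theorem IsIntegral.exists_pow_eq_one_of_norm_conj_eq_one {z : ℂ} (hz : IsIntegral ℤ z)
    (hconj : ∀ w : ℂ, aeval w (minpoly ℤ z) = 0 → ‖w‖ = 1) :
    ∃ k : ℕ, 0 < k ∧ z ^ k = 1 := by
  let K := ℚ⟮z⟯
  have : FiniteDimensional ℚ K := adjoin.finiteDimensional hz.tower_top
  have : NumberField K := ⟨⟩
  let x : K := AdjoinSimple.gen ℚ z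
  have hxz : algebraMap K ℂ x = z := rfl
  have hx : IsIntegral ℤ x := by
    rwa [← isIntegral_algebraMap_iff (algebraMap K ℂ).injective, hxz]
  have hminpoly : minpoly ℚ x = (minpoly ℤ z).map (algebraMap ℤ ℚ) := by
    rw [← minpoly.isIntegrallyClosed_eq_field_fractions' ℚ hz]
    exact minpoly_gen (F := ℚ) z
  have hnorm (φ : K →+* ℂ) : ‖φ x‖ = 1 := by
    have hmem : φ x ∈ (minpoly ℚ x).rootSet ℂ := by
      rw [← NumberField.Embeddings.range_eval_eq_rootSet_minpoly K ℂ x]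
      exact ⟨φ, rfl⟩
    have hroot := (mem_rootSet.mp hmem).2
    rw [hminpoly, aeval_map_algebraMap] at hroot
    exact hconj _ hroot
  obtain ⟨k, hk, hxk⟩ := NumberField.Embeddings.pow_eq_one_of_norm_eq_one K ℂ hx hnorm
  exact ⟨k, hk, by rw [← hxz, ← map_pow, hxk, map_one]⟩

theorem Polynomial.Monic.exists_pow_eq_one_of_roots_norm_eq_one {p : ℤ[X]} (hp : p.Monic)
    (hroots : ∀ z : ℂ, aeval z p = 0 → ‖z‖ = 1) {z : ℂ} (hz : aeval z p = 0) :
    ∃ k : ℕ, 0 < k ∧ z ^ k = 1 := by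
  have hint : IsIntegral ℤ z := ⟨p, hp, hz⟩
  obtain ⟨q, hq⟩ := minpoly.isIntegrallyClosed_dvd hint hz
  refine hint.exists_pow_eq_one_of_norm_conj_eq_one fun w hw ↦ hroots w ?_
  rw [hq, map_mul, hw, zero_mul]

theorem kronecker_theorem_general (n : ℕ) (M : Matrix (Fin n) (Fin n) ℤ)
    (habs : ∀ z : ℂ, (aeval z) M.charpoly = 0 → ‖z‖ = 1) :
    ∀ z : ℂ, (aeval z) M.charpoly = 0 → ∃ k : ℕ, 0 < k ∧ z ^ k = 1 :=
  fun _ ↦ M.charpoly_monic.exists_pow_eq_one_of_roots_norm_eq_one habs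

theorem kronecker_theorem (n : ℕ) (M : Matrix (Fin n) (Fin n) ℤ)
    (hMunit : IsUnit M.det)
    (habs : ∀ z : ℂ, (aeval z) M.charpoly = 0 → ‖z‖ = 1) :
    ∀ z : ℂ, (aeval z) M.charpoly = 0 → ∃ k : ℕ, 0 < k ∧ z ^ k = 1 :=
  kronecker_theorem_general n M habs
end

section
/- Let δ ∈ ℂ be an algebraic number with |δ| = 1 and let ε₁, ε₂ be the two roots of x² - c·x + δ = 0 where c ∈ ℂ satisfies that k := c²/δ - 2 is real with |k| < 2. Then |ε₁| = |ε₂| = 1. -/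
/-!
Put `eᵢ := εᵢ² / δ`. Then `e₁ e₂ = (ε₁ ε₂)² / δ² = 1` and `e₁ + e₂ = ((ε₁ + ε₂)² - 2 ε₁ ε₂) / δ = k`.
Two numbers with product `1` and real sum of absolute value `< 2` cannot be real (otherwise
`(e₁ + e₂)² = (e₁ - e₂)² + 4 ≥ 4`), and a non-real `z` with `z + z⁻¹` real lies on the unit circle,
since `Im (z + z⁻¹) = Im z · (1 - 1 / |z|²)`.
Hence `‖εᵢ‖² = ‖δ‖ ‖eᵢ‖ = 1`.
-/

namespace Complex

lemma im_ne_zero_of_mul_eq_one_of_add_eq_ofReal {z w : ℂ} {k : ℝ} (hmul : z * w = 1)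
    (hadd : z + w = k) (hk : |k| < 2) : z.im ≠ 0 := by
  intro hz
  have hw : w.im = 0 := by simpa [hz] using congrArg im hadd
  have hre_mul : z.re * w.re = 1 := by simpa [hz, hw] using congrArg re hmul
  have hre_add : z.re + w.re = k := by simpa using congrArg re hadd
  have hk_sq : k ^ 2 = (z.re - w.re) ^ 2 + 4 := by
    rw [← hre_add]
    linear_combination 4 * hre_mul
  nlinarith [sq_nonneg (z.re - w.re), abs_lt.mp hk]

lemma norm_eq_one_of_mul_eq_one_of_add_eq_ofReal {z w : ℂ} {k : ℝ} (hmul : z * w = 1)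
    (hadd : z + w = k) (hk : |k| < 2) : ‖z‖ = 1 := by
  have hz_im := im_ne_zero_of_mul_eq_one_of_add_eq_ofReal hmul hadd hk
  have hw : w = z⁻¹ := eq_inv_of_mul_eq_one_right hmul
  have him : z.im - z.im / normSq z = 0 := by
    simpa [hw, inv_im, sub_eq_add_neg, neg_div] using congrArg im hadd
  have hnormSq : ‖z‖ ^ 2 = 1 := by
    have hz : normSq z ≠ 0 := (normSq_pos.mpr (left_ne_zero_of_mul_eq_one hmul)).ne'
    field_simp at him
    rw [← normSq_eq_norm_sq, ← sub_eq_zero]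
    simpa [hz_im] using him
  exact (pow_eq_one_iff_of_nonneg (norm_nonneg z) two_ne_zero).mp hnormSq

end Complex

theorem roots_on_unit_circle_of_real_trace_general
    (δ c : ℂ) (hδ : ‖δ‖ = 1)
    (k : ℝ) (hk : (c ^ 2 / δ - 2 : ℂ) = (k : ℂ)) (hk2 : |k| < 2)
    (ε₁ ε₂ : ℂ) (hsum : ε₁ + ε₂ = c) (hprod : ε₁ * ε₂ = δ) :
    ‖ε₁‖ = 1 ∧ ‖ε₂‖ = 1 := by
  have hδ0 : δ ≠ 0 := norm_ne_zero_iff.mp (hδ ▸ one_ne_zero)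
  have hmul : ε₁ ^ 2 / δ * (ε₂ ^ 2 / δ) = 1 := by
    rw [div_mul_div_comm, ← mul_pow, hprod, ← sq, div_self (pow_ne_zero 2 hδ0)]
  have hadd : ε₁ ^ 2 / δ + ε₂ ^ 2 / δ = k := by
    rw [← hk, ← hsum]
    field_simp
    rw [← hprod]
    ring
  have norm_of_norm_sq_div {ε : ℂ} (h : ‖ε ^ 2 / δ‖ = 1) : ‖ε‖ = 1 := by
    rw [norm_div, norm_pow, hδ, div_one] at h
    exact (pow_eq_one_iff_of_nonneg (norm_nonneg ε) two_ne_zero).mp h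
  refine ⟨norm_of_norm_sq_div ?_, norm_of_norm_sq_div ?_⟩
  · exact Complex.norm_eq_one_of_mul_eq_one_of_add_eq_ofReal hmul hadd hk2
  · exact Complex.norm_eq_one_of_mul_eq_one_of_add_eq_ofReal (by rwa [mul_comm])
      (by rwa [add_comm]) hk2

theorem roots_on_unit_circle_of_real_trace
    (δ c : ℂ) (halg : IsAlgebraic ℚ δ) (hδ : ‖δ‖ = 1)
    (k : ℝ) (hk : (c ^ 2 / δ - 2 : ℂ) = (k : ℂ)) (hk2 : |k| < 2)
    (ε₁ ε₂ : ℂ) (hsum : ε₁ + ε₂ = c) (hprod : ε₁ * ε₂ = δ) :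
    ‖ε₁‖ = 1 ∧ ‖ε₂‖ = 1 :=
  roots_on_unit_circle_of_real_trace_general δ c hδ k hk hk2 ε₁ ε₂ hsum hprod
end
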